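/- arXiv:2312.16701 — 2 statements merged into one kernel-verified Lean document; each statement's English description precedes it below -/
import Mathlib

section
/- Let m ≠ 0 and E ∈ ℝ with 0 < |E| < |m|, and set ω := √(m² − E²). Define the 2×2 complex matrices a₁(ξ) := I + (m/√(ξ²+ω²))σ₃ for ξ ∈ ℝ, and a₂(ξ) := I − (2im²/(ξ²−E²))M for ξ ∈ ℝ with ξ ≠ ±E. Then the product a(ξ) := a₁(ξ)a₂(ξ), initially defined for ξ ≠ ±E, extends to a continuous matrix-valued function on all of ℝ; for every ξ ∈ ℝ the matrix a(ξ) is invertible with inverse a(ξ)⁻¹ = (I−M)·√(ξ²+ω²)/(√(ξ²+ω²)+|m|) + M·(1 + |m|/√(ξ²+ω²))·(1 + (2i+1)m²/(ξ²−E²−2im²)); and there exist constants 0 < c ≤ C (depending only on m and E) such that every eigenvalue μ of a(ξ) satisfies c ≤ |μ| ≤ C for all ξ ∈ ℝ. -/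
noncomputable section

/-- Pauli matrix `σ₃`. -/
def sigma3 : Matrix (Fin 2) (Fin 2) ℂ := !![1, 0; 0, -1]

/-- `M = diag(1,0)` if `m < 0`, `diag(0,1)` if `m > 0`. -/
def Mmat (m : ℝ) : Matrix (Fin 2) (Fin 2) ℂ :=
  if m < 0 then !![1, 0; 0, 0] else !![0, 0; 0, 1]

/-- The symbol `a₁(ξ) = I + (m/√(ξ²+ω²))σ₃`, with `ω² = m² − E²`. -/
def a1 (m E ξ : ℝ) : Matrix (Fin 2) (Fin 2) ℂ :=
  1 + (((m : ℂ)) / ((Real.sqrt (ξ ^ 2 + (m ^ 2 - E ^ 2)) : ℝ) : ℂ)) • sigma3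

/-- The symbol `a₂(ξ) = I − (2im²/(ξ²−E²))M`. -/
def a2 (m E ξ : ℝ) : Matrix (Fin 2) (Fin 2) ℂ :=
  1 - (2 * Complex.I * (m : ℂ) ^ 2 / ((ξ : ℂ) ^ 2 - (E : ℂ) ^ 2)) • Mmat m

/-- The claimed inverse of `a(ξ) = a₁(ξ)a₂(ξ)`. -/
def aInv (m E ξ : ℝ) : Matrix (Fin 2) (Fin 2) ℂ :=
  (((Real.sqrt (ξ ^ 2 + (m ^ 2 - E ^ 2)) : ℝ) : ℂ)
      / (((Real.sqrt (ξ ^ 2 + (m ^ 2 - E ^ 2)) : ℝ) : ℂ) + ((|m| : ℝ) : ℂ)))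
    • (1 - Mmat m)
  + ((1 + ((|m| : ℝ) : ℂ) / ((Real.sqrt (ξ ^ 2 + (m ^ 2 - E ^ 2)) : ℝ) : ℂ))
      * (1 + (2 * Complex.I + 1) * (m : ℂ) ^ 2
          / ((ξ : ℂ) ^ 2 - (E : ℂ) ^ 2 - 2 * Complex.I * (m : ℂ) ^ 2)))
    • Mmat m


/-!
`M` is idempotent and `m σ₃ = |m| ((I - M) - M)`, so `a₁`, `a₂` and hence `a = a₁a₂` all lie in
the commutative algebra spanned by `I - M` and `M`, where multiplication is coordinatewise:
`a = λ₁ (I - M) + λ₂ M`. With `ρ = √(ξ² + ω²)` one finds `λ₁ = 1 + |m|/ρ` and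
`λ₂ = (ξ² - E² - 2im²) / (ρ(ρ + |m|))`; the pole of `a₂` at `ξ = ±E` cancels against the zero of
`1 - |m|/ρ` because `ξ² - E² = (ρ - |m|)(ρ + |m|)`. Inverting `a` and locating its eigenvalues
reduces to the scalars `λ₁`, `λ₂`, and `|ξ² - E² - 2im²|` is comparable to `ρ² + m²`.
-/

section IdempotentDecomposition

open Matrix

theorem IsIdempotentElem.smul_one_sub_add_smul_mul {K A : Type*} [CommRing K] [Ring A]
    [Algebra K A] {P : A} (hP : IsIdempotentElem P) (a b c d : K) :
    (a • (1 - P) + b • P) * (c • (1 - P) + d • P) = (a * c) • (1 - P) + (b * d) • P := by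
  simp only [add_mul, mul_add, smul_mul_smul_comm, hP.one_sub.eq, hP.eq,
    hP.mul_one_sub_self, hP.one_sub_mul_self, smul_zero, add_zero, zero_add]

theorem IsIdempotentElem.smul_one_sub_add_smul_mul_eq_one {K A : Type*} [CommRing K] [Ring A]
    [Algebra K A] {P : A} (hP : IsIdempotentElem P) {a b c d : K} (hac : a * c = 1)
    (hbd : b * d = 1) : (a • (1 - P) + b • P) * (c • (1 - P) + d • P) = 1 := by
  rw [hP.smul_one_sub_add_smul_mul, hac, hbd, one_smul, one_smul, sub_add_cancel]

theorem IsIdempotentElem.eq_or_eq_of_mulVec_eq_smul {K n : Type*} [Field K] [Fintype n]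
    [DecidableEq n] {P : Matrix n n K} (hP : IsIdempotentElem P) {a b μ : K} {v : n → K}
    (hv : v ≠ 0) (h : (a • (1 - P) + b • P) *ᵥ v = μ • v) : μ = a ∨ μ = b := by
  have hcompl : (1 - P) * (a • (1 - P) + b • P) = a • (1 - P) := by
    simpa using hP.smul_one_sub_add_smul_mul 1 0 a b
  have hrange : P * (a • (1 - P) + b • P) = b • P := by
    simpa using hP.smul_one_sub_add_smul_mul 0 1 a b
  have eigen_of {Q : Matrix n n K} {c : K} (hQ : Q * (a • (1 - P) + b • P) = c • Q)
      (hc : μ ≠ c) : Q *ᵥ v = 0 := by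
    have : c • (Q *ᵥ v) = μ • (Q *ᵥ v) := by
      rw [← smul_mulVec, ← hQ, ← mulVec_mulVec, h, mulVec_smul]
    rw [← sub_eq_zero, ← sub_smul] at this
    exact (smul_eq_zero.mp this).resolve_left (sub_ne_zero.mpr hc.symm)
  by_contra! hne
  apply hv
  rw [← one_mulVec v, ← sub_add_cancel 1 P, add_mulVec,
    eigen_of hcompl hne.1, eigen_of hrange hne.2, add_zero]

end IdempotentDecomposition

theorem Mmat_isIdempotentElem (m : ℝ) : IsIdempotentElem (Mmat m) := by
  unfold IsIdempotentElem Mmat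
  split_ifs <;> ext i j <;> fin_cases i <;> fin_cases j <;> simp

theorem ofReal_smul_sigma3 (m : ℝ) :
    (m : ℂ) • sigma3 = ((|m| : ℝ) : ℂ) • ((1 - Mmat m) - Mmat m) := by
  unfold Mmat sigma3
  split_ifs with hm
  · rw [abs_of_neg hm]
    ext i j; fin_cases i <;> fin_cases j <;> simp
  · rw [abs_of_nonneg (not_lt.mp hm)]
    ext i j; fin_cases i <;> fin_cases j <;> simp

namespace FlatSymbol

def rho (m E ξ : ℝ) : ℝ := √(ξ ^ 2 + (m ^ 2 - E ^ 2))

def lam₁ (m E ξ : ℝ) : ℂ := 1 + ((|m| : ℝ) : ℂ) / (rho m E ξ : ℂ)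

def numer (m E ξ : ℝ) : ℂ := (ξ : ℂ) ^ 2 - (E : ℂ) ^ 2 - 2 * Complex.I * (m : ℂ) ^ 2

def lam₂ (m E ξ : ℝ) : ℂ :=
  numer m E ξ / ((rho m E ξ : ℂ) * ((rho m E ξ : ℂ) + ((|m| : ℝ) : ℂ)))

def symbol (m E ξ : ℝ) : Matrix (Fin 2) (Fin 2) ℂ :=
  lam₁ m E ξ • (1 - Mmat m) + lam₂ m E ξ • Mmat m

variable {m E : ℝ}

theorem omegaSq_pos (hEm : |E| < |m|) : 0 < m ^ 2 - E ^ 2 := by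
  nlinarith [sq_abs m, sq_abs E, abs_nonneg E]

theorem rho_sq (hEm : |E| < |m|) (ξ : ℝ) : rho m E ξ ^ 2 = ξ ^ 2 + (m ^ 2 - E ^ 2) :=
  Real.sq_sqrt (by nlinarith [omegaSq_pos hEm, sq_nonneg ξ])

theorem sqrt_omegaSq_le_rho (ξ : ℝ) : √(m ^ 2 - E ^ 2) ≤ rho m E ξ :=
  Real.sqrt_le_sqrt (by nlinarith [sq_nonneg ξ])

theorem rho_pos (hEm : |E| < |m|) (ξ : ℝ) : 0 < rho m E ξ :=
  (Real.sqrt_pos.mpr (omegaSq_pos hEm)).trans_le (sqrt_omegaSq_le_rho ξ)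

theorem continuous_rho : Continuous (rho m E) := by
  unfold rho; fun_prop

theorem ofReal_rho_ne_zero (hEm : |E| < |m|) (ξ : ℝ) : (rho m E ξ : ℂ) ≠ 0 :=
  Complex.ofReal_ne_zero.mpr (rho_pos hEm ξ).ne'

theorem ofReal_rho_add_abs_ne_zero (hEm : |E| < |m|) (ξ : ℝ) :
    (rho m E ξ : ℂ) + ((|m| : ℝ) : ℂ) ≠ 0 := by
  exact_mod_cast (add_pos_of_pos_of_nonneg (rho_pos hEm ξ) (abs_nonneg m)).ne'

theorem sq_sub_sq_eq_rho (hEm : |E| < |m|) (ξ : ℝ) :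
    (ξ : ℂ) ^ 2 - (E : ℂ) ^ 2
      = ((rho m E ξ : ℂ) - ((|m| : ℝ) : ℂ)) * ((rho m E ξ : ℂ) + ((|m| : ℝ) : ℂ)) := by
  have h : ξ ^ 2 - E ^ 2 = (rho m E ξ - |m|) * (rho m E ξ + |m|) := by
    nlinarith [rho_sq hEm ξ, sq_abs m]
  exact_mod_cast h

theorem ofReal_rho_sub_abs_ne_zero (hEm : |E| < |m|) {ξ : ℝ} (h₁ : ξ ≠ E) (h₂ : ξ ≠ -E) :
    (rho m E ξ : ℂ) - ((|m| : ℝ) : ℂ) ≠ 0 := by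
  intro h
  have hsq : (ξ : ℂ) ^ 2 = (E : ℂ) ^ 2 := by
    rw [← sub_eq_zero, sq_sub_sq_eq_rho hEm, h, zero_mul]
  rcases sq_eq_sq_iff_eq_or_eq_neg.mp hsq with h' | h'
  · exact h₁ (by exact_mod_cast h')
  · exact h₂ (by exact_mod_cast h')

theorem a1_eq (m E ξ : ℝ) :
    a1 m E ξ = lam₁ m E ξ • (1 - Mmat m)
      + (1 - ((|m| : ℝ) : ℂ) / (rho m E ξ : ℂ)) • Mmat m := by
  rw [a1, div_eq_inv_mul, mul_smul, ofReal_smul_sigma3, lam₁]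
  unfold rho
  module

theorem a2_eq (m E ξ : ℝ) :
    a2 m E ξ = (1 : ℂ) • (1 - Mmat m)
      + (1 - 2 * Complex.I * (m : ℂ) ^ 2 / ((ξ : ℂ) ^ 2 - (E : ℂ) ^ 2)) • Mmat m := by
  rw [a2]
  module

theorem a1_mul_a2 (hEm : |E| < |m|) {ξ : ℝ} (h₁ : ξ ≠ E) (h₂ : ξ ≠ -E) :
    a1 m E ξ * a2 m E ξ = symbol m E ξ := by
  rw [a1_eq, a2_eq, (Mmat_isIdempotentElem m).smul_one_sub_add_smul_mul, mul_one, symbol,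
    lam₂, numer, sq_sub_sq_eq_rho hEm]
  have := ofReal_rho_ne_zero hEm ξ
  have := ofReal_rho_add_abs_ne_zero hEm ξ
  have := ofReal_rho_sub_abs_ne_zero hEm h₁ h₂
  congr 2
  field_simp

theorem numer_re (m E ξ : ℝ) : (numer m E ξ).re = ξ ^ 2 - E ^ 2 := by
  simp [numer, ← Complex.ofReal_pow]

theorem numer_im (m E ξ : ℝ) : (numer m E ξ).im = -(2 * m ^ 2) := by
  simp [numer, ← Complex.ofReal_pow]

theorem numer_ne_zero (hm : m ≠ 0) (ξ : ℝ) : numer m E ξ ≠ 0 := by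
  intro h
  have him := numer_im m E ξ
  rw [h, Complex.zero_im] at him
  exact hm (pow_eq_zero_iff two_ne_zero |>.mp (by linarith))

theorem aInv_eq (m E ξ : ℝ) :
    aInv m E ξ = ((rho m E ξ : ℂ) / ((rho m E ξ : ℂ) + ((|m| : ℝ) : ℂ))) • (1 - Mmat m)
      + (lam₁ m E ξ * (1 + (2 * Complex.I + 1) * (m : ℂ) ^ 2 / numer m E ξ)) • Mmat m :=
  rfl

theorem lam₁_mul_aInv_coeff (hEm : |E| < |m|) (ξ : ℝ) :
    lam₁ m E ξ * ((rho m E ξ : ℂ) / ((rho m E ξ : ℂ) + ((|m| : ℝ) : ℂ))) = 1 := by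
  have := ofReal_rho_ne_zero hEm ξ
  have := ofReal_rho_add_abs_ne_zero hEm ξ
  rw [lam₁]
  field_simp

theorem lam₂_mul_aInv_coeff (hm : m ≠ 0) (hEm : |E| < |m|) (ξ : ℝ) :
    lam₂ m E ξ * (lam₁ m E ξ * (1 + (2 * Complex.I + 1) * (m : ℂ) ^ 2 / numer m E ξ)) = 1 := by
  have := ofReal_rho_ne_zero hEm ξ
  have := ofReal_rho_add_abs_ne_zero hEm ξ
  have := numer_ne_zero (E := E) hm ξ
  have hρ : (rho m E ξ : ℂ) ^ 2 = (ξ : ℂ) ^ 2 + ((m : ℂ) ^ 2 - (E : ℂ) ^ 2) := by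
    exact_mod_cast rho_sq hEm ξ
  rw [lam₁, lam₂]
  field_simp
  rw [numer]
  linear_combination -hρ

theorem symbol_mul_aInv (hm : m ≠ 0) (hEm : |E| < |m|) (ξ : ℝ) :
    symbol m E ξ * aInv m E ξ = 1 := by
  rw [aInv_eq]
  exact (Mmat_isIdempotentElem m).smul_one_sub_add_smul_mul_eq_one (lam₁_mul_aInv_coeff hEm ξ)
    (lam₂_mul_aInv_coeff hm hEm ξ)

theorem aInv_mul_symbol (hm : m ≠ 0) (hEm : |E| < |m|) (ξ : ℝ) :
    aInv m E ξ * symbol m E ξ = 1 := by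
  rw [aInv_eq]
  exact (Mmat_isIdempotentElem m).smul_one_sub_add_smul_mul_eq_one
    ((mul_comm _ _).trans (lam₁_mul_aInv_coeff hEm ξ))
    ((mul_comm _ _).trans (lam₂_mul_aInv_coeff hm hEm ξ))

theorem continuous_symbol (hEm : |E| < |m|) : Continuous (symbol m E) := by
  have hρ : Continuous fun ξ ↦ (rho m E ξ : ℂ) := Complex.continuous_ofReal.comp continuous_rho
  have hlam₁ : Continuous (lam₁ m E) :=
    continuous_const.add (continuous_const.div hρ (ofReal_rho_ne_zero hEm))
  have hlam₂ : Continuous (lam₂ m E) :=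
    (by unfold numer; fun_prop : Continuous (numer m E)).div (hρ.mul (hρ.add continuous_const))
      fun ξ ↦ mul_ne_zero (ofReal_rho_ne_zero hEm ξ) (ofReal_rho_add_abs_ne_zero hEm ξ)
  exact (hlam₁.smul continuous_const).add (hlam₂.smul continuous_const)

theorem lam₁_eq_ofReal (m E ξ : ℝ) : lam₁ m E ξ = ((1 + |m| / rho m E ξ : ℝ) : ℂ) := by
  push_cast; rfl

theorem one_le_norm_lam₁ (hEm : |E| < |m|) (ξ : ℝ) : 1 ≤ ‖lam₁ m E ξ‖ := by
  have : 0 ≤ |m| / rho m E ξ := div_nonneg (abs_nonneg m) (rho_pos hEm ξ).le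
  rw [lam₁_eq_ofReal, Complex.norm_real, Real.norm_of_nonneg (by linarith)]
  linarith

theorem norm_lam₁_le (hEm : |E| < |m|) (ξ : ℝ) :
    ‖lam₁ m E ξ‖ ≤ 1 + |m| / √(m ^ 2 - E ^ 2) := by
  have : 0 ≤ |m| / rho m E ξ := div_nonneg (abs_nonneg m) (rho_pos hEm ξ).le
  rw [lam₁_eq_ofReal, Complex.norm_real, Real.norm_of_nonneg (by linarith)]
  gcongr
  · exact Real.sqrt_pos.mpr (omegaSq_pos hEm)
  · exact sqrt_omegaSq_le_rho ξ

theorem norm_numer_sq (hEm : |E| < |m|) (ξ : ℝ) :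
    ‖numer m E ξ‖ ^ 2 = (rho m E ξ ^ 2 - m ^ 2) ^ 2 + (2 * m ^ 2) ^ 2 := by
  rw [Complex.sq_norm, Complex.normSq_apply, numer_re, numer_im, rho_sq hEm]
  ring

theorem norm_lam₂ (hEm : |E| < |m|) (ξ : ℝ) :
    ‖lam₂ m E ξ‖ = ‖numer m E ξ‖ / (rho m E ξ * (rho m E ξ + |m|)) := by
  have := rho_pos hEm ξ
  rw [lam₂, norm_div, ← Complex.ofReal_add, ← Complex.ofReal_mul, Complex.norm_real,
    Real.norm_of_nonneg (by positivity)]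

theorem one_third_le_norm_lam₂ (hEm : |E| < |m|) (ξ : ℝ) : 1 / 3 ≤ ‖lam₂ m E ξ‖ := by
  have hρ := rho_pos hEm ξ
  have hnum : (rho m E ξ ^ 2 + m ^ 2) / 2 ≤ ‖numer m E ξ‖ := by
    rw [← pow_le_pow_iff_left₀ (by positivity) (norm_nonneg _) two_ne_zero,
      norm_numer_sq hEm]
    nlinarith [sq_nonneg (rho m E ξ ^ 2 - 3 * m ^ 2)]
  rw [norm_lam₂ hEm, le_div_iff₀ (by positivity)]
  nlinarith [sq_nonneg (rho m E ξ - |m|), sq_abs m]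

theorem norm_lam₂_le (hEm : |E| < |m|) (ξ : ℝ) :
    ‖lam₂ m E ξ‖ ≤ 1 + 3 * m ^ 2 / (m ^ 2 - E ^ 2) := by
  have hρ := rho_pos hEm ξ
  have hω := omegaSq_pos hEm
  have hnum : ‖numer m E ξ‖ ≤ rho m E ξ ^ 2 + 3 * m ^ 2 := by
    rw [← pow_le_pow_iff_left₀ (norm_nonneg _) (by positivity) two_ne_zero,
      norm_numer_sq hEm]
    nlinarith [sq_nonneg (rho m E ξ * m), sq_nonneg m]
  calc ‖lam₂ m E ξ‖
      ≤ (rho m E ξ ^ 2 + 3 * m ^ 2) / rho m E ξ ^ 2 := by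
        rw [norm_lam₂ hEm]
        gcongr
        nlinarith [abs_nonneg m]
    _ = 1 + 3 * m ^ 2 / rho m E ξ ^ 2 := by field_simp
    _ ≤ 1 + 3 * m ^ 2 / (m ^ 2 - E ^ 2) := by
        gcongr
        rw [rho_sq hEm]
        nlinarith [sq_nonneg ξ]

end FlatSymbol

open FlatSymbol

theorem flat_symbol_invertible_general
    (m E : ℝ) (hm : m ≠ 0) (hEm : |E| < |m|) :
    ∃ A : ℝ → Matrix (Fin 2) (Fin 2) ℂ,
      Continuous A ∧
      (∀ ξ : ℝ, ξ ≠ E → ξ ≠ -E → A ξ = a1 m E ξ * a2 m E ξ) ∧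
      (∀ ξ : ℝ, A ξ * aInv m E ξ = 1 ∧ aInv m E ξ * A ξ = 1) ∧
      ∃ c C : ℝ, 0 < c ∧ c ≤ C ∧
        ∀ (ξ : ℝ) (μ : ℂ) (v : Fin 2 → ℂ), v ≠ 0 →
          Matrix.mulVec (A ξ) v = μ • v →
          c ≤ ‖μ‖ ∧ ‖μ‖ ≤ C := by
  refine ⟨symbol m E, continuous_symbol hEm, fun ξ h₁ h₂ ↦ (a1_mul_a2 hEm h₁ h₂).symm,
    fun ξ ↦ ⟨symbol_mul_aInv hm hEm ξ, aInv_mul_symbol hm hEm ξ⟩, 1 / 3,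
    max (1 + |m| / √(m ^ 2 - E ^ 2)) (1 + 3 * m ^ 2 / (m ^ 2 - E ^ 2)), by norm_num,
    (by norm_num : (1 : ℝ) / 3 ≤ 1).trans (le_max_of_le_left (le_add_of_nonneg_right
      (div_nonneg (abs_nonneg m) (Real.sqrt_nonneg _)))), ?_⟩
  intro ξ μ v hv hμ
  rcases (Mmat_isIdempotentElem m).eq_or_eq_of_mulVec_eq_smul hv hμ with rfl | rfl
  · exact ⟨(by norm_num : (1 : ℝ) / 3 ≤ 1).trans (one_le_norm_lam₁ hEm ξ),
      (norm_lam₁_le hEm ξ).trans (le_max_left _ _)⟩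
  · exact ⟨one_third_le_norm_lam₂ hEm ξ, (norm_lam₂_le hEm ξ).trans (le_max_right _ _)⟩

/-- **Lemma (the flat symbol `a = a₁a₂` is invertible with explicit inverse).**
The product `a₁(ξ)a₂(ξ)`, a priori defined for `ξ ≠ ±E`, extends continuously to
all of `ℝ`; its inverse is given by the explicit formula `aInv`, and its
eigenvalues are bounded and bounded away from zero, uniformly in `ξ`. -/
theorem flat_symbol_invertible
    (m E : ℝ) (hm : m ≠ 0) (hE : 0 < |E|) (hEm : |E| < |m|) :
    ∃ A : ℝ → Matrix (Fin 2) (Fin 2) ℂ,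
      Continuous A ∧
      (∀ ξ : ℝ, ξ ≠ E → ξ ≠ -E → A ξ = a1 m E ξ * a2 m E ξ) ∧
      (∀ ξ : ℝ, A ξ * aInv m E ξ = 1 ∧ aInv m E ξ * A ξ = 1) ∧
      ∃ c C : ℝ, 0 < c ∧ c ≤ C ∧
        ∀ (ξ : ℝ) (μ : ℂ) (v : Fin 2 → ℂ), v ≠ 0 →
          Matrix.mulVec (A ξ) v = μ • v →
          c ≤ ‖μ‖ ∧ ‖μ‖ ≤ C :=
  flat_symbol_invertible_general m E hm hEm

end
end

section
/- Let γ : ℝ → ℝ² be a C² injective curve with |γ'(t)| = 1 for all t, satisfying |γ''(t)| ≤ C₂ e^{−η|t|} for all t (for some constants C₂, η > 0), and such that |γ(t)| → ∞, |γ(−t)| → ∞, and |γ(t) − γ(−t)| → ∞ as t → +∞. Then there exists c > 0 such that |γ(t) − γ(s)| ≥ c|t − s| for all s, t ∈ ℝ. -/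
open Filter

noncomputable section

/-- The Euclidean norm on `ℝ × ℝ`. -/
def e2 (v : ℝ × ℝ) : ℝ := Real.sqrt (v.1 ^ 2 + v.2 ^ 2)

/-!
Integrating the curvature bound shows that the unit tangent converges exponentially fast at both
ends, so each end of the curve stays within distance `C₂ / η²` of a straight ray, and the whole
curve within bounded distance of the broken line formed by the two rays. Since the ends separate,
the two ray directions differ, the broken line is bi-Lipschitz, and so
`|γ t - γ s| ≥ c₀ |t - s| - M`. Near the diagonal the curvature bound alone gives
`|γ t - γ s| ≥ |t - s| / 2`, far out along either end the nearby ray does, and the remaining pairs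
`(s, t)` form a compact set on which injectivity gives a positive lower bound.
-/

open Set Topology Real

section

variable {E : Type*} [NormedAddCommGroup E]

theorem exists_pos_mul_abs_sub_le_norm_sub_of_local_of_far {f : ℝ → E} (hf : Continuous f)
    (hinj : Function.Injective f) {δ T c₁ c₀ M : ℝ} (hδ : 0 < δ) (hc₁ : 0 < c₁) (hc₀ : 0 < c₀)
    (hlocal : ∀ s t, s ≤ t → (t - s ≤ δ ∨ T ≤ s ∨ t ≤ -T) → c₁ * (t - s) ≤ ‖f t - f s‖)
    (hfar : ∀ s t, s ≤ t → c₀ * (t - s) - M ≤ ‖f t - f s‖) :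
    ∃ c > 0, ∀ s t, c * |t - s| ≤ ‖f t - f s‖ := by
  set R := max δ (2 * M / c₀)
  have hR : 0 < R := lt_max_of_lt_left hδ
  set A := |T| + R
  -- pairs covered by neither `hlocal` nor `hfar` lie in this compact set
  set S := (Icc (-A) A ×ˢ Icc (-A) A) ∩ {p : ℝ × ℝ | δ ≤ p.2 - p.1}
  have hS : IsCompact S := (isCompact_Icc.prod isCompact_Icc).inter_right
    (isClosed_le continuous_const (continuous_snd.sub continuous_fst))
  obtain ⟨m, hm, hmS⟩ := hS.exists_forall_le' (f := fun p ↦ ‖f p.2 - f p.1‖) (by fun_prop)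
    fun p hp ↦ norm_pos_iff.2 (sub_ne_zero.2 (hinj.ne (by linarith [hp.2.out])))
  set c := min c₁ (min (c₀ / 2) (m / R))
  have hordered : ∀ s t, s ≤ t → c * (t - s) ≤ ‖f t - f s‖ := by
    intro s t hst
    have hts : 0 ≤ t - s := sub_nonneg.2 hst
    by_cases hnear : t - s ≤ δ ∨ T ≤ s ∨ t ≤ -T
    · exact (mul_le_mul_of_nonneg_right (min_le_left _ _) hts).trans (hlocal s t hst hnear)
    push Not at hnear
    obtain ⟨hδst, hsT, htT⟩ := hnear
    by_cases hbig : R ≤ t - s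
    · have hM : 2 * M ≤ c₀ * (t - s) :=
        (div_le_iff₀' hc₀).1 ((le_max_right _ _).trans hbig)
      calc c * (t - s) ≤ c₀ / 2 * (t - s) :=
            mul_le_mul_of_nonneg_right ((min_le_right _ _).trans (min_le_left _ _)) hts
        _ ≤ c₀ * (t - s) - M := by linarith
        _ ≤ _ := hfar s t hst
    · push Not at hbig
      have hT := le_abs_self T
      have hT' := neg_abs_le T
      have hp : (s, t) ∈ S := ⟨⟨⟨by linarith, by linarith⟩, ⟨by linarith, by linarith⟩⟩, hδst.le⟩
      calc c * (t - s) ≤ m / R * R :=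
            mul_le_mul ((min_le_right _ _).trans (min_le_right _ _)) hbig.le hts (by positivity)
        _ = m := div_mul_cancel₀ _ hR.ne'
        _ ≤ _ := hmS _ hp
  refine ⟨c, by positivity, fun s t ↦ ?_⟩
  rcases le_total s t with hst | hts
  · rw [abs_of_nonneg (sub_nonneg.2 hst)]
    exact hordered s t hst
  · rw [abs_sub_comm, abs_of_nonneg (sub_nonneg.2 hts), norm_sub_rev]
    exact hordered t s hts

theorem exists_tendsto_atTop_of_norm_sub_le [CompleteSpace E] {f : ℝ → E} {φ : ℝ → ℝ} {a : ℝ}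
    (hφ : Tendsto φ atTop (𝓝 0)) (h : ∀ s t, a ≤ s → s ≤ t → ‖f t - f s‖ ≤ φ s) :
    ∃ v, Tendsto f atTop (𝓝 v) ∧ ∀ s, a ≤ s → ‖f s - v‖ ≤ φ s := by
  have hcauchy : CauchySeq f := by
    refine Metric.cauchySeq_iff'.2 fun ε hε ↦ ?_
    obtain ⟨N, hN, hNa⟩ := ((hφ.eventually (gt_mem_nhds hε)).and (eventually_ge_atTop a)).exists
    exact ⟨N, fun t ht ↦ (dist_eq_norm _ _).trans_lt ((h N t hNa ht).trans_lt hN)⟩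
  obtain ⟨v, hv⟩ := cauchySeq_tendsto_of_complete hcauchy
  refine ⟨v, hv, fun s hs ↦ ?_⟩
  rw [norm_sub_rev]
  refine le_of_tendsto (hv.sub_const (f s)).norm ?_
  filter_upwards [eventually_ge_atTop s] with t ht using h s t hs ht

variable [NormedSpace ℝ E]

theorem sub_le_norm_of_norm_sub_smul_le {x u : E} {r e : ℝ} (hu : ‖u‖ = 1) (hr : 0 ≤ r)
    (h : ‖x - r • u‖ ≤ e) : r - e ≤ ‖x‖ := by
  have := norm_sub_norm_le (r • u) x
  rw [norm_smul, hu, Real.norm_of_nonneg hr, mul_one, norm_sub_rev] at this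
  linarith

theorem norm_sub_le_of_norm_deriv_le_exp {f f' : ℝ → E} {C η s t : ℝ} (hη : 0 < η)
    (hst : s ≤ t) (hf : ∀ u ∈ Icc s t, HasDerivAt f (f' u) u)
    (hbound : ∀ u ∈ Icc s t, ‖f' u‖ ≤ C * exp (-η * u)) :
    ‖f t - f s‖ ≤ C / η * exp (-η * s) := by
  have hC : 0 ≤ C :=
    nonneg_of_mul_nonneg_left ((norm_nonneg _).trans (hbound s ⟨le_rfl, hst⟩)) (exp_pos _)
  have hB : ∀ u, HasDerivAt (fun u ↦ C / η * (exp (-η * s) - exp (-η * u)))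
      (C * exp (-η * u)) u := fun u ↦
    ((((hasDerivAt_id' u).const_mul (-η)).exp.const_sub _).const_mul (C / η)).congr_deriv
      (by field_simp)
  have key := image_norm_le_of_norm_deriv_right_le_deriv_boundary (f := fun u ↦ f u - f s)
    (fun u hu ↦ ((hf u hu).continuousAt.sub continuousAt_const).continuousWithinAt)
    (fun u hu ↦ ((hf u (Ico_subset_Icc_self hu)).sub_const (f s)).hasDerivWithinAt)
    (by simp) hB (fun u hu ↦ hbound u (Ico_subset_Icc_self hu)) ⟨hst, le_rfl⟩
  calc ‖f t - f s‖ ≤ C / η * (exp (-η * s) - exp (-η * t)) := key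
    _ ≤ C / η * exp (-η * s) := by
      gcongr
      exact sub_le_self _ (exp_pos _).le

theorem exists_tendsto_atTop_norm_sub_sub_smul_le [CompleteSpace E] {F G G' : ℝ → E} {C η : ℝ}
    (hη : 0 < η) (hF : ∀ t, HasDerivAt F (G t) t) (hG : ∀ t, HasDerivAt G (G' t) t)
    (hdec : ∀ t, 0 ≤ t → ‖G' t‖ ≤ C * exp (-η * t)) :
    ∃ v, Tendsto G atTop (𝓝 v) ∧
      ∀ s t, 0 ≤ s → s ≤ t → ‖F t - F s - (t - s) • v‖ ≤ C / η ^ 2 * exp (-η * s) := by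
  have hdecay : Tendsto (fun s ↦ C / η * exp (-η * s)) atTop (𝓝 0) := by
    simpa using (tendsto_exp_comp_nhds_zero.2
      (tendsto_id.const_mul_atTop_of_neg (neg_neg_of_pos hη))).const_mul (C / η)
  obtain ⟨v, hv, hGv⟩ := exists_tendsto_atTop_of_norm_sub_le hdecay fun s t hs hst ↦
    norm_sub_le_of_norm_deriv_le_exp hη hst (fun u _ ↦ hG u) fun u hu ↦ hdec u (hs.trans hu.1)
  refine ⟨v, hv, fun s t hs hst ↦ ?_⟩
  have hFv : ∀ u, HasDerivAt (fun u ↦ F u - u • v) (G u - v) u := fun u ↦ by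
    simpa using (hF u).fun_sub ((hasDerivAt_id u).smul_const v)
  have := norm_sub_le_of_norm_deriv_le_exp hη hst (fun u _ ↦ hFv u)
    fun u hu ↦ hGv u (hs.trans hu.1)
  rw [div_div, ← sq] at this
  convert this using 2
  rw [sub_smul]
  abel

theorem norm_sub_sub_smul_le_mul_sq {F G G' : ℝ → E} {C s t : ℝ} (hst : s ≤ t)
    (hF : ∀ u, HasDerivAt F (G u) u) (hG : ∀ u, HasDerivAt G (G' u) u)
    (hbound : ∀ u, ‖G' u‖ ≤ C) :
    ‖F t - F s - (t - s) • G s‖ ≤ C * (t - s) ^ 2 := by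
  have hC : 0 ≤ C := (norm_nonneg _).trans (hbound s)
  have hGlip : ∀ u ∈ Icc s t, ‖G u - G s‖ ≤ C * (t - s) := fun u hu ↦
    (norm_image_sub_le_of_norm_deriv_le_segment' (fun x _ ↦ (hG x).hasDerivWithinAt)
      (fun x _ ↦ hbound x) u hu).trans (by gcongr; exact hu.2)
  have hFG : ∀ u, HasDerivAt (fun u ↦ F u - u • G s) (G u - G s) u := fun u ↦ by
    simpa using (hF u).fun_sub ((hasDerivAt_id u).smul_const (G s))
  have := norm_image_sub_le_of_norm_deriv_le_segment' (fun x _ ↦ (hFG x).hasDerivWithinAt)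
    (fun x hx ↦ hGlip x (Ico_subset_Icc_self hx)) t ⟨hst, le_rfl⟩
  rw [mul_assoc, ← sq] at this
  convert this using 2
  rw [sub_smul]
  abel

theorem exists_pos_mul_add_le_norm_smul_sub_smul {v w : E} (hvw : v ≠ w) (hnorm : ‖v‖ = ‖w‖) :
    ∃ c > 0, ∀ a b : ℝ, 0 ≤ a → 0 ≤ b → c * (a + b) ≤ ‖a • v - b • w‖ := by
  have hv : ‖v‖ ≠ 0 := fun h ↦
    hvw ((norm_eq_zero.1 h).trans (norm_eq_zero.1 (hnorm.symm.trans h)).symm)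
  -- on the segment `λ v - (1 - λ) w`, a zero forces `λ = 1/2` by taking norms, hence `v = w`
  have hpos : ∀ l ∈ Icc (0 : ℝ) 1, 0 < ‖l • v - (1 - l) • w‖ := by
    intro l hl
    rw [norm_pos_iff, sub_ne_zero]
    intro h
    have hnorms := congrArg norm h
    rw [norm_smul, norm_smul, Real.norm_of_nonneg hl.1, Real.norm_of_nonneg (sub_nonneg.2 hl.2),
      ← hnorm] at hnorms
    have hl2 : l = 1 - l := mul_right_cancel₀ hv hnorms
    rw [← hl2] at h
    exact hvw (smul_right_injective E (by linarith : l ≠ 0) h)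
  obtain ⟨c, hc, hcle⟩ := isCompact_Icc.exists_forall_le' (by fun_prop) hpos
  refine ⟨c, hc, fun a b ha hb ↦ ?_⟩
  rcases (add_nonneg ha hb).eq_or_lt with hab | hab
  · rw [← hab, mul_zero]
    exact norm_nonneg _
  have hsplit : a • v - b • w = (a + b) • ((a / (a + b)) • v - (1 - a / (a + b)) • w) := by
    rw [smul_sub, smul_smul, smul_smul, mul_div_cancel₀ _ hab.ne', mul_one_sub,
      mul_div_cancel₀ _ hab.ne', add_sub_cancel_left]
  rw [hsplit, norm_smul, Real.norm_of_nonneg hab.le, mul_comm c]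
  gcongr
  exact hcle _ ⟨by positivity, div_le_one_of_le₀ (le_add_of_nonneg_right hb) hab.le⟩

def brokenLine (v w : E) (t : ℝ) : E := if 0 ≤ t then t • v else (-t) • w

theorem exists_pos_mul_abs_sub_le_norm_brokenLine_sub {v w : E} (hv : ‖v‖ = 1) (hw : ‖w‖ = 1)
    (hvw : v ≠ w) : ∃ c > 0, ∀ s t, c * |t - s| ≤ ‖brokenLine v w t - brokenLine v w s‖ := by
  obtain ⟨c, hc, hsep⟩ := exists_pos_mul_add_le_norm_smul_sub_smul hvw (hv.trans hw.symm)
  have hc1 : min c 1 ≤ 1 := min_le_right _ _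
  refine ⟨min c 1, lt_min hc one_pos, fun s t ↦ ?_⟩
  unfold brokenLine
  split_ifs with ht hs hs
  · rw [← sub_smul, norm_smul, hv, Real.norm_eq_abs, mul_one]
    exact mul_le_of_le_one_left (abs_nonneg _) hc1
  · rw [abs_of_nonneg (by linarith : 0 ≤ t - s), sub_eq_add_neg]
    exact (mul_le_mul_of_nonneg_right (min_le_left _ _) (by linarith)).trans
      (hsep t (-s) ht (by linarith))
  · rw [abs_sub_comm, abs_of_nonneg (by linarith : 0 ≤ s - t), sub_eq_add_neg, norm_sub_rev]
    exact (mul_le_mul_of_nonneg_right (min_le_left _ _) (by linarith)).trans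
      (hsep s (-t) hs (by linarith))
  · rw [← sub_smul, norm_smul, hw, Real.norm_eq_abs, mul_one, neg_sub_neg, abs_sub_comm]
    exact mul_le_of_le_one_left (abs_nonneg _) hc1

theorem exists_pos_mul_abs_sub_sub_le_norm_sub_of_rays {F : ℝ → E} {v w : E} {K : ℝ}
    (hv : ‖v‖ = 1) (hw : ‖w‖ = 1)
    (hright : ∀ t, 0 ≤ t → ‖F t - F 0 - t • v‖ ≤ K)
    (hleft : ∀ t, 0 ≤ t → ‖F (-t) - F 0 - t • w‖ ≤ K)
    (hsep : Tendsto (fun t ↦ ‖F t - F (-t)‖) atTop atTop) :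
    ∃ c > 0, ∀ s t, c * |t - s| - 2 * K ≤ ‖F t - F s‖ := by
  have hline : ∀ t, ‖F t - F 0 - brokenLine v w t‖ ≤ K := fun t ↦ by
    unfold brokenLine
    split_ifs with ht
    · exact hright t ht
    · simpa using hleft (-t) (by linarith)
  have hclose : ∀ s t, ‖(F t - F s) - (brokenLine v w t - brokenLine v w s)‖ ≤ 2 * K := by
    intro s t
    calc ‖(F t - F s) - (brokenLine v w t - brokenLine v w s)‖
        = ‖(F t - F 0 - brokenLine v w t) - (F s - F 0 - brokenLine v w s)‖ := by
          congr 1; abel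
      _ ≤ K + K := (norm_sub_le _ _).trans (add_le_add (hline t) (hline s))
      _ = 2 * K := by ring
  have hvw : v ≠ w := by
    rintro rfl
    obtain ⟨t, ht, ht0⟩ := ((hsep.eventually_gt_atTop (2 * K)).and (eventually_gt_atTop 0)).exists
    have hzero : brokenLine v v t - brokenLine v v (-t) = 0 := by
      simp [brokenLine, ht0.le, ht0.not_ge]
    have := hclose (-t) t
    rw [hzero, sub_zero] at this
    linarith
  obtain ⟨c, hc, hc_le⟩ := exists_pos_mul_abs_sub_le_norm_brokenLine_sub hv hw hvw
  refine ⟨c, hc, fun s t ↦ ?_⟩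
  have := norm_sub_norm_le (brokenLine v w t - brokenLine v w s) (F t - F s)
  rw [norm_sub_rev _ (F t - F s)] at this
  linarith [hc_le s t, hclose s t]

theorem half_le_norm_sub_of_mul_le_half {F G G' : ℝ → E} {C s t : ℝ} (hst : s ≤ t)
    (hF : ∀ u, HasDerivAt F (G u) u) (hG : ∀ u, HasDerivAt G (G' u) u)
    (hunit : ∀ u, ‖G u‖ = 1) (hbound : ∀ u, ‖G' u‖ ≤ C) (hsmall : C * (t - s) ≤ 1 / 2) :
    (t - s) / 2 ≤ ‖F t - F s‖ := by
  have hts : 0 ≤ t - s := sub_nonneg.2 hst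
  have htaylor := norm_sub_sub_smul_le_mul_sq hst hF hG hbound
  have hsq : C * (t - s) ^ 2 ≤ (t - s) / 2 := by nlinarith
  linarith [sub_le_norm_of_norm_sub_smul_le (hunit s) hts htaylor]

theorem exists_sub_sub_le_norm_sub_of_rays {F : ℝ → E} {v w : E} {K η ε : ℝ} (hη : 0 < η)
    (hε : 0 < ε) (hv : ‖v‖ = 1) (hw : ‖w‖ = 1)
    (hright : ∀ s t, 0 ≤ s → s ≤ t → ‖F t - F s - (t - s) • v‖ ≤ K * exp (-η * s))
    (hleft : ∀ s t, 0 ≤ s → s ≤ t → ‖F (-t) - F (-s) - (t - s) • w‖ ≤ K * exp (-η * s)) :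
    ∃ T, ∀ s t, s ≤ t → (T ≤ s ∨ t ≤ -T) → t - s - ε ≤ ‖F t - F s‖ := by
  have hdecay : Tendsto (fun s ↦ K * exp (-η * s)) atTop (𝓝 0) := by
    simpa using (tendsto_exp_comp_nhds_zero.2
      (tendsto_id.const_mul_atTop_of_neg (neg_neg_of_pos hη))).const_mul K
  obtain ⟨T, hT⟩ := eventually_atTop.1 (hdecay.eventually (ge_mem_nhds hε))
  refine ⟨max T 0, fun s t hst hends ↦ ?_⟩
  have hts : 0 ≤ t - s := sub_nonneg.2 hst
  rcases hends with hs | ht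
  · have h := hright s t ((le_max_right _ _).trans hs) hst
    linarith [sub_le_norm_of_norm_sub_smul_le hv hts h, hT s ((le_max_left _ _).trans hs)]
  · have h := hleft (-t) (-s) (by linarith [le_max_right T 0]) (by linarith)
    rw [neg_neg, neg_neg, neg_sub_neg] at h
    linarith [sub_le_norm_of_norm_sub_smul_le hw hts h, norm_sub_rev (F s) (F t),
      hT (-t) (by linarith [le_max_left T 0])]

section UnitSpeed

variable [CompleteSpace E] {F G G' : ℝ → E} {C η : ℝ}

theorem exists_unit_end_directions (hη : 0 < η) (hF : ∀ t, HasDerivAt F (G t) t)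
    (hG : ∀ t, HasDerivAt G (G' t) t) (hunit : ∀ t, ‖G t‖ = 1)
    (hdec : ∀ t, ‖G' t‖ ≤ C * exp (-η * |t|)) :
    ∃ v w : E, ‖v‖ = 1 ∧ ‖w‖ = 1 ∧
      (∀ s t, 0 ≤ s → s ≤ t → ‖F t - F s - (t - s) • v‖ ≤ C / η ^ 2 * exp (-η * s)) ∧
      (∀ s t, 0 ≤ s → s ≤ t → ‖F (-t) - F (-s) - (t - s) • w‖ ≤ C / η ^ 2 * exp (-η * s)) := by
  have hnorm : ∀ {H : ℝ → E} {v : E}, (∀ t, ‖H t‖ = 1) → Tendsto H atTop (𝓝 v) → ‖v‖ = 1 :=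
    fun hH hv ↦ tendsto_nhds_unique hv.norm (by simp [hH])
  obtain ⟨v, hv, hright⟩ := exists_tendsto_atTop_norm_sub_sub_smul_le hη hF hG
    fun t ht ↦ by simpa [abs_of_nonneg ht] using hdec t
  obtain ⟨w, hw, hleft⟩ := exists_tendsto_atTop_norm_sub_sub_smul_le (F := fun t ↦ F (-t))
    (G := fun t ↦ -G (-t)) (G' := fun t ↦ G' (-t)) hη
    (fun t ↦ by simpa [Function.comp_def] using (hF (-t)).scomp t (hasDerivAt_neg t))
    (fun t ↦ by
      simpa [Function.comp_def, Pi.neg_def] using ((hG (-t)).scomp t (hasDerivAt_neg t)).neg)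
    fun t ht ↦ by simpa [abs_of_nonneg ht] using hdec (-t)
  exact ⟨v, w, hnorm hunit hv, hnorm (fun t ↦ by simp [hunit]) hw, hright, hleft⟩

theorem exists_pos_mul_abs_sub_le_norm_sub_of_unit_speed (hC : 0 < C) (hη : 0 < η)
    (hF : ∀ t, HasDerivAt F (G t) t) (hG : ∀ t, HasDerivAt G (G' t) t)
    (hunit : ∀ t, ‖G t‖ = 1) (hdec : ∀ t, ‖G' t‖ ≤ C * exp (-η * |t|))
    (hinj : Function.Injective F) (hsep : Tendsto (fun t ↦ ‖F t - F (-t)‖) atTop atTop) :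
    ∃ c > 0, ∀ s t, c * |t - s| ≤ ‖F t - F s‖ := by
  obtain ⟨v, w, hv, hw, hright, hleft⟩ := exists_unit_end_directions hη hF hG hunit hdec
  obtain ⟨c₀, hc₀, hfar⟩ := exists_pos_mul_abs_sub_sub_le_norm_sub_of_rays hv hw
    (fun t ht ↦ by simpa using hright 0 t le_rfl ht) (fun t ht ↦ by simpa using hleft 0 t le_rfl ht)
    hsep
  set δ := 1 / (2 * C)
  have hδ : 0 < δ := by positivity
  obtain ⟨T, hends⟩ := exists_sub_sub_le_norm_sub_of_rays hη (half_pos hδ) hv hw hright hleft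
  have hbound : ∀ u, ‖G' u‖ ≤ C := fun u ↦ (hdec u).trans
    (mul_le_of_le_one_right hC.le (exp_le_one_iff.2 (by nlinarith [abs_nonneg u])))
  refine exists_pos_mul_abs_sub_le_norm_sub_of_local_of_far (T := T)
    (continuous_iff_continuousAt.2 fun t ↦ (hF t).continuousAt) hinj hδ one_half_pos hc₀
    (fun s t hst hlocal ↦ ?_) fun s t hst ↦ by
      simpa [abs_of_nonneg (sub_nonneg.2 hst)] using hfar s t
  rcases le_or_gt (t - s) δ with hnear | hapart
  · have hsmall : C * (t - s) ≤ 1 / 2 := by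
      rw [← le_div_iff₀' hC, div_div]
      exact hnear
    linarith [half_le_norm_sub_of_mul_le_half hst hF hG hunit hbound hsmall]
  · have hT : T ≤ s ∨ t ≤ -T := hlocal.resolve_left hapart.not_ge
    linarith [hends s t hst hT]

end UnitSpeed

end

theorem e2_eq_norm_toLp (v : ℝ × ℝ) : e2 v = ‖WithLp.toLp 2 v‖ := by
  rw [WithLp.prod_norm_eq_of_L2]
  simp [e2, Real.norm_eq_abs, sq_abs]

theorem chord_arc_estimate_general
    (γ : ℝ → ℝ × ℝ) (C₂ η : ℝ) (hC₂ : 0 < C₂) (hη : 0 < η)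
    (hγ : ContDiff ℝ 2 γ) (hinj : Function.Injective γ)
    (harc : ∀ t, e2 (deriv γ t) = 1)
    (hdec : ∀ t, e2 (iteratedDeriv 2 γ t) ≤ C₂ * Real.exp (-η * |t|))
    (hend3 : Tendsto (fun t => e2 (γ t - γ (-t))) atTop atTop) :
    ∃ c > (0 : ℝ), ∀ s t : ℝ, c * |t - s| ≤ e2 (γ t - γ s) := by
  let L := (WithLp.prodContinuousLinearEquiv 2 ℝ ℝ ℝ).symm
  have hL : ∀ v, e2 v = ‖L v‖ := e2_eq_norm_toLp
  have hγ' : ∀ t, HasDerivAt γ (deriv γ t) t := fun t ↦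
    (hγ.differentiable two_ne_zero t).hasDerivAt
  have hγ'd : Differentiable ℝ (deriv γ) := by
    simpa only [iteratedDeriv_one] using hγ.differentiable_iteratedDeriv' 1
  have hγ'' : ∀ t, HasDerivAt (deriv γ) (iteratedDeriv 2 γ t) t := fun t ↦ by
    rw [iteratedDeriv_succ, iteratedDeriv_one]
    exact (hγ'd t).hasDerivAt
  obtain ⟨c, hc, hchord⟩ := exists_pos_mul_abs_sub_le_norm_sub_of_unit_speed
    (F := L ∘ γ) (G := L ∘ deriv γ) (G' := L ∘ iteratedDeriv 2 γ) hC₂ hη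
    (fun t ↦ L.hasFDerivAt.comp_hasDerivAt t (hγ' t))
    (fun t ↦ L.hasFDerivAt.comp_hasDerivAt t (hγ'' t))
    (fun t ↦ (hL _).symm.trans (harc t)) (fun t ↦ (hL _).symm.trans_le (hdec t))
    (L.injective.comp hinj) (by simpa [hL, ← map_sub] using hend3)
  exact ⟨c, hc, fun s t ↦ by simpa [hL] using hchord s t⟩

/-- **Lemma (chord-arc estimate for asymptotically flat curves).**
If `γ` is a `C²` injective arclength parameterization with exponentially
decaying curvature, whose two ends go to infinity and separate from each
other, then `|γ(t) − γ(s)| ≥ c|t − s|` for some `c > 0`. -/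
theorem chord_arc_estimate
    (γ : ℝ → ℝ × ℝ) (C₂ η : ℝ) (hC₂ : 0 < C₂) (hη : 0 < η)
    (hγ : ContDiff ℝ 2 γ) (hinj : Function.Injective γ)
    (harc : ∀ t, e2 (deriv γ t) = 1)
    (hdec : ∀ t, e2 (iteratedDeriv 2 γ t) ≤ C₂ * Real.exp (-η * |t|))
    (hend1 : Tendsto (fun t => e2 (γ t)) atTop atTop)
    (hend2 : Tendsto (fun t => e2 (γ (-t))) atTop atTop)
    (hend3 : Tendsto (fun t => e2 (γ t - γ (-t))) atTop atTop) :
    ∃ c > (0 : ℝ), ∀ s t : ℝ, c * |t - s| ≤ e2 (γ t - γ s) :=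
  chord_arc_estimate_general γ C₂ η hC₂ hη hγ hinj harc hdec hend3

end
end
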